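/- Let ℱ be a family of finite simple graphs and let K be a colored regularity graph such that no F ∈ ℱ admits a colored homomorphism into K. Then for every n ≥ 2 and every simple graph G on n vertices with m edges, there exists an ℱ-free graph G′ on the same vertex set with |E(G) △ E(G′)| ≤ f_K(m/binom(n,2)) · binom(n,2). In particular, Dist(G, Forb(ℱ)) ≤ f_K(m/binom(n,2)) · binom(n,2). -/

import Mathlib

/-- The three possible colors of an edge of a colored regularity graph. -/
inductive EColor : Type
  | white
  | gray
  | black
deriving DecidableEq

/-- A colored regularity graph (CRG): a finite nonempty vertex set (here `Fin n`),
each vertex colored white (`vcol i = false`) or black (`vcol i = true`), and each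
unordered pair of distinct vertices colored white, gray or black. -/
structure CRG : Type where
  n : ℕ
  npos : 0 < n
  vcol : Fin n → Bool
  ecol : Fin n → Fin n → EColor
  ecol_symm : ∀ i j, ecol i j = ecol j i

namespace CRG

/-- The function `f_K(p) = (1/k²)[p(|VW| + 2|EW|) + (1-p)(|VB| + 2|EB|)]`; the
counts over ordered pairs of distinct vertices give `2|EW|` and `2|EB|`. -/
noncomputable def fK (K : CRG) (p : ℝ) : ℝ :=
  (1 / (K.n : ℝ) ^ 2) *
    (p * (((Finset.univ.filter (fun i : Fin K.n => K.vcol i = false)).card : ℝ)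
        + ((Finset.univ.filter (fun ij : Fin K.n × Fin K.n =>
            ij.1 ≠ ij.2 ∧ K.ecol ij.1 ij.2 = EColor.white)).card : ℝ))
   + (1 - p) * (((Finset.univ.filter (fun i : Fin K.n => K.vcol i = true)).card : ℝ)
        + ((Finset.univ.filter (fun ij : Fin K.n × Fin K.n =>
            ij.1 ≠ ij.2 ∧ K.ecol ij.1 ij.2 = EColor.black)).card : ℝ)))

/-- The matrix `M_K(p)`. -/
noncomputable def M (K : CRG) (p : ℝ) : Matrix (Fin K.n) (Fin K.n) ℝ :=
  Matrix.of fun i j =>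
    if i = j then (if K.vcol i then 1 - p else p)
    else
      match K.ecol i j with
      | EColor.white => p
      | EColor.gray => 0
      | EColor.black => 1 - p

/-- The function `g_K(p)`: the minimum (here: infimum, which is attained) of the
quadratic form `uᵀ M_K(p) u` over the standard simplex. -/
noncomputable def gK (K : CRG) (p : ℝ) : ℝ :=
  sInf { x : ℝ | ∃ u : Fin K.n → ℝ, (∀ i, 0 ≤ u i) ∧ (∑ i, u i) = 1 ∧
    x = ∑ i, ∑ j, u i * K.M p i j * u j }

end CRG

/-- A colored homomorphism from a simple graph `F` to a CRG `K`. -/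
def CHom {V : Type} (F : SimpleGraph V) (K : CRG) : Prop :=
  ∃ φ : V → Fin K.n,
    (∀ u v : V, F.Adj u v →
      (φ u = φ v ∧ K.vcol (φ u) = true) ∨
      (φ u ≠ φ v ∧ K.ecol (φ u) (φ v) ≠ EColor.white)) ∧
    (∀ u v : V, u ≠ v → ¬ F.Adj u v →
      (φ u = φ v ∧ K.vcol (φ u) = false) ∨
      (φ u ≠ φ v ∧ K.ecol (φ u) (φ v) ≠ EColor.black))

/-- A family of finite simple graphs, each presented on a vertex set `Fin n`. -/
abbrev GraphFam : Type := Set ((n : ℕ) × SimpleGraph (Fin n))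

/-- The edit distance between two simple graphs on the same finite vertex set. -/
noncomputable def editDist {V : Type} [Fintype V] (G G' : SimpleGraph V) : ℕ :=
  (symmDiff G.edgeSet G'.edgeSet).ncard

/-- A graph `G` is `ℱ`-free if no member of `ℱ` embeds into `G`. -/
def FamFree (ℱ : GraphFam) {V : Type} (G : SimpleGraph V) : Prop :=
  ∀ F ∈ ℱ, ¬ Nonempty (F.2 ↪g G)

/-- `Dist(G, Forb(ℱ))`: minimum edit distance from `G` to an `ℱ`-free graph on
the same vertex set. -/
noncomputable def distFam (ℱ : GraphFam) {V : Type} [Fintype V] (G : SimpleGraph V) : ℕ :=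
  sInf { d | ∃ G' : SimpleGraph V, FamFree ℱ G' ∧ d = editDist G G' }

/-- `Dist(n, Forb(ℱ))`: maximum of `Dist(G, Forb(ℱ))` over `n`-vertex graphs. -/
noncomputable def distFamN (ℱ : GraphFam) (n : ℕ) : ℕ :=
  sSup { d | ∃ G : SimpleGraph (Fin n), d = distFam ℱ G }

/-- `𝒦(ℱ)`: the set of CRGs into which no member of `ℱ` has a colored homomorphism. -/
def KFam (ℱ : GraphFam) : Set CRG := { K : CRG | ∀ F ∈ ℱ, ¬ CHom F.2 K }

/-!
Spread the vertices of `G` over `K` by a uniformly random map `φ` and let `G_φ` decide each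
pair `uv` by the color of the cell `(φ u, φ v)`, where a diagonal cell `(i, i)` carries the color
of the vertex `i`: the pair is an edge on a black cell, a non-edge on a white one, and as in `G` on
a gray one. A copy of some `F ∈ ℱ` in `G_φ`, composed with `φ`, is a colored homomorphism
`F → K`; hence `G_φ` is `ℱ`-free. For `u ≠ v` the cell `(φ u, φ v)` is uniform among the `k²`
cells, so an edge of `G` is lost with probability `(|VW| + 2|EW|)/k²` and a non-edge is gained
with probability `(|VB| + 2|EB|)/k²`. The expected edit distance is therefore exactly
`f_K(m / C(n,2)) · C(n,2)`, and some `φ` does no worse.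
-/

open Finset

section Counting

variable {V α : Type*} [Fintype V] [DecidableEq V] [Fintype α] [DecidableEq α]

theorem card_filter_apply_eq_and_apply_eq {u v : V} (huv : u ≠ v) (i j : α) :
    #{f : V → α | f u = i ∧ f v = j} = Fintype.card α ^ (Fintype.card V - 2) := by
  have hfilter : ({f : V → α | f u = i ∧ f v = j} : Finset (V → α)) =
      Fintype.piFinset fun w => if w = u then {i} else if w = v then {j} else univ := by
    ext f
    simp only [mem_filter, mem_univ, true_and, Fintype.mem_piFinset]
    refine ⟨fun ⟨hu, hv⟩ w => ?_, fun h => ⟨by simpa using h u, by simpa [huv.symm] using h v⟩⟩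
    split_ifs with hwu hwv
    · simp [hwu, hu]
    · simp [hwv, hv]
    · exact mem_univ _
  rw [hfilter, Fintype.card_piFinset, ← prod_compl_mul_prod {u, v}, prod_pair huv]
  have hcompl : ∀ w ∈ ({u, v} : Finset V)ᶜ,
      #(if w = u then {i} else if w = v then {j} else (univ : Finset α)) = Fintype.card α := by
    intro w hw
    simp only [mem_compl, mem_insert, mem_singleton, not_or] at hw
    simp [hw.1, hw.2]
  rw [prod_congr rfl hcompl, prod_const, card_compl, card_pair huv]
  simp [huv.symm]

theorem sum_apply_pair_eq {M : Type*} [AddCommMonoid M] {u v : V} (huv : u ≠ v)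
    (F : α × α → M) :
    ∑ f : V → α, F (f u, f v) = Fintype.card α ^ (Fintype.card V - 2) • ∑ x, F x := by
  rw [← sum_fiberwise univ (fun f : V → α => (f u, f v)), smul_sum]
  refine sum_congr rfl fun x _ => ?_
  rw [sum_congr rfl fun f hf => congrArg F (mem_filter.1 hf).2, sum_const]
  simp only [Prod.ext_iff]
  rw [card_filter_apply_eq_and_apply_eq huv]

theorem card_filter_ite_eq_add (P : α → Prop) (Q : α × α → Prop) [DecidablePred P]
    [DecidablePred Q] :
    #{x : α × α | if x.1 = x.2 then P x.1 else Q x} =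
      #{a | P a} + #{x : α × α | x.1 ≠ x.2 ∧ Q x} := by
  have hdiag : #{x : α × α | x.1 = x.2 ∧ P x.1} = #{a | P a} := by
    refine card_bij' (fun x _ => x.1) (fun a _ => (a, a)) ?_ ?_ ?_ ?_ <;>
      simp +contextual [Prod.ext_iff, eq_comm]
  rw [← hdiag, ← card_union_of_disjoint (disjoint_filter.2 fun x _ h h' => h'.1 h.1),
    ← filter_or]
  congr 1
  exact filter_congr fun x _ => ite_prop_iff_or

end Counting

namespace SimpleGraph

variable {V : Type*} [Fintype V]

theorem card_filter_adj_eq_two_mul (H : SimpleGraph V) [DecidableRel H.Adj] :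
    #{x : V × V | H.Adj x.1 x.2} = 2 * #H.edgeFinset := by
  rw [← dart_card_eq_twice_card_edges, ← Fintype.card_subtype]
  exact Fintype.card_congr ⟨fun x => ⟨x.1, x.2⟩, fun d => ⟨d.toProd, d.adj⟩,
    fun _ => rfl, fun _ => rfl⟩

theorem card_edgeFinset_compl [DecidableEq V] (G : SimpleGraph V) [DecidableRel G.Adj] :
    #Gᶜ.edgeFinset = (Fintype.card V).choose 2 - #G.edgeFinset := by
  rw [← card_edgeFinset_top_eq_card_choose_two, ← card_sdiff_of_subset (edgeFinset_mono le_top),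
    ← edgeFinset_sdiff]
  congr!

end SimpleGraph

theorem two_mul_editDist {V : Type} [Fintype V] [DecidableEq V] (G G' : SimpleGraph V)
    [DecidableRel G.Adj] [DecidableRel G'.Adj] :
    2 * editDist G G' = #{x : V × V | ¬(G.Adj x.1 x.2 ↔ G'.Adj x.1 x.2)} := by
  have hedge : symmDiff G.edgeSet G'.edgeSet = (symmDiff G G').edgeSet := by
    rw [symmDiff_def, symmDiff_def, SimpleGraph.edgeSet_sup, SimpleGraph.edgeSet_sdiff,
      SimpleGraph.edgeSet_sdiff]
    rfl
  classical
  rw [editDist, hedge, ← SimpleGraph.coe_edgeFinset, Set.ncard_coe_finset,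
    ← SimpleGraph.card_filter_adj_eq_two_mul]
  congr 1
  refine filter_congr fun x _ => ?_
  simp only [symmDiff_def, SimpleGraph.sup_adj, SimpleGraph.sdiff_adj]
  tauto

namespace CRG

variable (K : CRG)

instance : Nonempty (Fin K.n) := ⟨⟨0, K.npos⟩⟩

def cellColor (i j : Fin K.n) : EColor :=
  if i = j then (if K.vcol i then .black else .white) else K.ecol i j

theorem cellColor_comm (i j : Fin K.n) : K.cellColor i j = K.cellColor j i := by
  unfold cellColor
  split_ifs with h h' h' <;> simp_all [K.ecol_symm i j]

theorem cellColor_ne_white_iff (i j : Fin K.n) :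
    K.cellColor i j ≠ .white ↔
      (i = j ∧ K.vcol i = true) ∨ (i ≠ j ∧ K.ecol i j ≠ .white) := by
  unfold cellColor
  by_cases h : i = j <;> cases K.vcol i <;> simp [h]

theorem cellColor_ne_black_iff (i j : Fin K.n) :
    K.cellColor i j ≠ .black ↔
      (i = j ∧ K.vcol i = false) ∨ (i ≠ j ∧ K.ecol i j ≠ .black) := by
  unfold cellColor
  by_cases h : i = j <;> cases K.vcol i <;> simp [h]

def numCells (c : EColor) : ℕ := #{x : Fin K.n × Fin K.n | K.cellColor x.1 x.2 = c}

theorem numCells_eq (c : EColor) :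
    K.numCells c = #{i | (if K.vcol i then EColor.black else .white) = c} +
      #{x : Fin K.n × Fin K.n | x.1 ≠ x.2 ∧ K.ecol x.1 x.2 = c} := by
  rw [numCells, ← card_filter_ite_eq_add]
  simp only [cellColor, apply_ite (· = c)]

theorem fK_eq (p : ℝ) :
    K.fK p = (p * K.numCells .white + (1 - p) * K.numCells .black) / K.n ^ 2 := by
  have hvertex : ∀ b : Bool,
      #{i | (if K.vcol i then EColor.black else .white) = (if b then .black else .white)} =
        #{i | K.vcol i = b} := fun b => by
    congr 1
    exact filter_congr fun i _ => by cases K.vcol i <;> cases b <;> simp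
  rw [fK, numCells_eq, numCells_eq, ← hvertex false, ← hvertex true]
  simp only [Bool.false_eq_true, if_true, if_false]
  push_cast
  ring

def cellAdj (i j : Fin K.n) (a : Prop) : Prop :=
  K.cellColor i j = .black ∨ (K.cellColor i j = .gray ∧ a)

instance (i j : Fin K.n) (a : Prop) [Decidable a] : Decidable (K.cellAdj i j a) :=
  inferInstanceAs (Decidable (_ ∨ _))

theorem not_iff_cellAdj (i j : Fin K.n) (a : Prop) :
    ¬(a ↔ K.cellAdj i j a) ↔
      (a ∧ K.cellColor i j = .white) ∨ (¬a ∧ K.cellColor i j = .black) := by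
  unfold cellAdj
  cases K.cellColor i j <;> simp

def recolor {V : Type*} (G : SimpleGraph V) (φ : V → Fin K.n) : SimpleGraph V where
  Adj u v := u ≠ v ∧ K.cellAdj (φ u) (φ v) (G.Adj u v)
  symm := ⟨fun u v ⟨hne, h⟩ =>
    ⟨hne.symm, by simpa only [cellAdj, K.cellColor_comm (φ v), G.adj_comm v] using h⟩⟩
  loopless := ⟨fun _ h => h.1 rfl⟩

instance {V : Type*} [DecidableEq V] (G : SimpleGraph V) [DecidableRel G.Adj]
    (φ : V → Fin K.n) : DecidableRel (K.recolor G φ).Adj :=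
  fun u v => inferInstanceAs (Decidable (u ≠ v ∧ K.cellAdj (φ u) (φ v) (G.Adj u v)))

theorem recolor_adj {V : Type*} (G : SimpleGraph V) (φ : V → Fin K.n) (u v : V) :
    (K.recolor G φ).Adj u v ↔ u ≠ v ∧ K.cellAdj (φ u) (φ v) (G.Adj u v) := Iff.rfl

theorem cHom_of_embedding_recolor {W V : Type} {F : SimpleGraph W} {G : SimpleGraph V}
    {φ : V → Fin K.n} (e : F ↪g K.recolor G φ) : CHom F K := by
  refine ⟨φ ∘ e, fun a b hab => ?_, fun a b hne hab => ?_⟩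
  · have hadj : K.cellAdj (φ (e a)) (φ (e b)) (G.Adj (e a) (e b)) := (e.map_adj_iff.2 hab).2
    exact (K.cellColor_ne_white_iff (φ (e a)) (φ (e b))).1 fun hw => by
      simp [cellAdj, hw] at hadj
  · have hadj : ¬K.cellAdj (φ (e a)) (φ (e b)) (G.Adj (e a) (e b)) :=
      fun h => hab (e.map_adj_iff.1 ⟨e.injective.ne hne, h⟩)
    exact (K.cellColor_ne_black_iff (φ (e a)) (φ (e b))).1 fun hb => hadj (Or.inl hb)

theorem famFree_recolor {ℱ : GraphFam} (hK : K ∈ KFam ℱ) {V : Type} (G : SimpleGraph V)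
    (φ : V → Fin K.n) : FamFree ℱ (K.recolor G φ) :=
  fun F hF ⟨e⟩ => hK F hF (K.cHom_of_embedding_recolor e)

section Averaging

variable {V : Type} [Fintype V] [DecidableEq V] (G : SimpleGraph V) [DecidableRel G.Adj]

theorem card_filter_not_adj_iff_recolor_adj (u v : V) :
    #{φ : V → Fin K.n | ¬(G.Adj u v ↔ (K.recolor G φ).Adj u v)} =
      K.n ^ (Fintype.card V - 2) *
        ((if G.Adj u v then K.numCells .white else 0) +
          (if Gᶜ.Adj u v then K.numCells .black else 0)) := by
  rcases eq_or_ne u v with rfl | huv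
  · simp
  rw [card_filter]
  simp only [recolor_adj, and_iff_right huv]
  rw [sum_apply_pair_eq huv
      (fun x => if ¬(G.Adj u v ↔ K.cellAdj x.1 x.2 (G.Adj u v)) then 1 else 0),
    Fintype.card_fin, smul_eq_mul, ← card_filter]
  simp only [not_iff_cellAdj]
  by_cases hadj : G.Adj u v <;> simp [hadj, huv, numCells]

theorem sum_editDist_recolor :
    ∑ φ : V → Fin K.n, editDist G (K.recolor G φ) =
      K.n ^ (Fintype.card V - 2) *
        (#G.edgeFinset * K.numCells .white + #Gᶜ.edgeFinset * K.numCells .black) := by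
  refine Nat.eq_of_mul_eq_mul_left two_pos ?_
  calc 2 * ∑ φ : V → Fin K.n, editDist G (K.recolor G φ)
      = ∑ φ : V → Fin K.n, #{x : V × V | ¬(G.Adj x.1 x.2 ↔ (K.recolor G φ).Adj x.1 x.2)} := by
        rw [mul_sum]
        exact sum_congr rfl fun φ _ => two_mul_editDist G _
    _ = ∑ x : V × V, #{φ : V → Fin K.n | ¬(G.Adj x.1 x.2 ↔ (K.recolor G φ).Adj x.1 x.2)} := by
        simp only [card_filter]
        exact sum_comm
    _ = ∑ x : V × V, K.n ^ (Fintype.card V - 2) *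
          ((if G.Adj x.1 x.2 then K.numCells .white else 0) +
            (if Gᶜ.Adj x.1 x.2 then K.numCells .black else 0)) :=
        sum_congr rfl fun x _ => K.card_filter_not_adj_iff_recolor_adj G x.1 x.2
    _ = K.n ^ (Fintype.card V - 2) * (#{x : V × V | G.Adj x.1 x.2} * K.numCells .white +
          #{x : V × V | Gᶜ.Adj x.1 x.2} * K.numCells .black) := by
        rw [← mul_sum, sum_add_distrib, ← sum_filter, ← sum_filter, sum_const, sum_const,
          smul_eq_mul, smul_eq_mul]
    _ = _ := by
        rw [SimpleGraph.card_filter_adj_eq_two_mul, SimpleGraph.card_filter_adj_eq_two_mul]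
        ring

theorem sum_editDist_recolor_eq_fK (hV : 2 ≤ Fintype.card V) :
    ∑ φ : V → Fin K.n, (editDist G (K.recolor G φ) : ℝ) =
      Fintype.card (V → Fin K.n) *
        (K.fK (#G.edgeFinset / (Fintype.card V).choose 2) * (Fintype.card V).choose 2) := by
  have hC : ((Fintype.card V).choose 2 : ℝ) ≠ 0 := by exact_mod_cast (Nat.choose_pos hV).ne'
  have hpow : (K.n : ℝ) ^ Fintype.card V = K.n ^ (Fintype.card V - 2) * K.n ^ 2 := by
    rw [← pow_add, Nat.sub_add_cancel hV]
  have hk : (K.n : ℝ) ≠ 0 := by exact_mod_cast K.npos.ne'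
  rw [← Nat.cast_sum, sum_editDist_recolor, SimpleGraph.card_edgeFinset_compl, fK_eq,
    Fintype.card_fun, Fintype.card_fin]
  push_cast [Nat.cast_sub G.card_edgeFinset_le_card_choose_two]
  rw [hpow]
  field_simp

end Averaging

end CRG

theorem crg_upper_bound (ℱ : GraphFam) (K : CRG) (hK : K ∈ KFam ℱ)
    (n m : ℕ) (hn : 2 ≤ n) (G : SimpleGraph (Fin n)) (hm : G.edgeSet.ncard = m) :
    (∃ G' : SimpleGraph (Fin n), FamFree ℱ G' ∧
      (editDist G G' : ℝ) ≤ K.fK ((m : ℝ) / (n.choose 2 : ℝ)) * (n.choose 2 : ℝ)) ∧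
    (distFam ℱ G : ℝ) ≤ K.fK ((m : ℝ) / (n.choose 2 : ℝ)) * (n.choose 2 : ℝ) := by
  classical
  obtain rfl : #G.edgeFinset = m := by rw [← hm, ← G.coe_edgeFinset, Set.ncard_coe_finset]
  have hsum := K.sum_editDist_recolor_eq_fK G (by simpa using hn)
  rw [← card_univ, ← nsmul_eq_mul, ← sum_const, Fintype.card_fin] at hsum
  obtain ⟨φ, -, hφ⟩ := exists_le_of_sum_le univ_nonempty hsum.le
  have hfree := K.famFree_recolor hK G φ
  have hdist : distFam ℱ G ≤ editDist G (K.recolor G φ) := Nat.sInf_le ⟨_, hfree, rfl⟩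
  exact ⟨⟨_, hfree, hφ⟩, le_trans (by exact_mod_cast hdist) hφ⟩
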